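/- Let (F¹, F²) ∈ ℝ² with (F¹, F²) ≠ (0,0). The space of real arrays (X^i_{jk}) (i, j, k ∈ {1,2}), symmetric in j and k, satisfying the four linear equations 2F¹X¹₁₁ + F²X²₁₁ + F¹X²₁₂ = 0, 2F¹X¹₁₂ + F²X²₁₂ + F¹X²₂₂ = 0, F²X¹₁₁ + F¹X¹₁₂ + 2F²X²₁₂ = 0, F²X¹₁₂ + F¹X¹₂₂ + 2F²X²₂₂ = 0, has dimension 2. (This is the statement dim (g¹_{θ₂})⁽¹⁾ = 2 for the first prolongation of the degree-one part of the isotropy algebra of a generic 2-jet.) -/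

import Mathlib

/-!
Interchanging the coordinates `x¹ ↔ x²` maps the system for `(F¹, F²)` onto the system for
`(F², F¹)`, so we may assume `F¹ ≠ 0`. Then the first and third equations determine `X²₁₂` and
`X¹₁₂` from `X¹₁₁, X²₁₁`, after which the second and fourth determine `X²₂₂` and `X¹₂₂`:
projecting to `(X¹₁₁, X²₁₁)` is an isomorphism onto `ℝ²`.
-/

/-- The first prolongation of g¹: symmetric arrays X^i_{jk} = `X i j k` (index value `0`
standing for `1` and `1` for `2`) satisfying the four equations. -/
def P (F1 F2 : ℝ) : Submodule ℝ (Fin 2 → Fin 2 → Fin 2 → ℝ) where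
  carrier := {X | (∀ i j k, X i j k = X i k j) ∧
    2*F1*X 0 0 0 + F2*X 1 0 0 + F1*X 1 0 1 = 0 ∧
    2*F1*X 0 0 1 + F2*X 1 0 1 + F1*X 1 1 1 = 0 ∧
    F2*X 0 0 0 + F1*X 0 0 1 + 2*F2*X 1 0 1 = 0 ∧
    F2*X 0 0 1 + F1*X 0 1 1 + 2*F2*X 1 1 1 = 0}
  add_mem' := by
    rintro X Y ⟨hs, h1, h2, h3, h4⟩ ⟨hs', h1', h2', h3', h4'⟩
    refine ⟨fun i j k => ?_, ?_, ?_, ?_, ?_⟩ <;>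
      simp only [Pi.add_apply] <;>
      first
        | rw [hs i j k, hs' i j k]
        | linear_combination h1 + h1'
        | linear_combination h2 + h2'
        | linear_combination h3 + h3'
        | linear_combination h4 + h4'
  zero_mem' := by
    refine ⟨fun i j k => rfl, ?_, ?_, ?_, ?_⟩ <;> simp
  smul_mem' := by
    rintro c X ⟨hs, h1, h2, h3, h4⟩
    refine ⟨fun i j k => ?_, ?_, ?_, ?_, ?_⟩ <;>
      simp only [Pi.smul_apply, smul_eq_mul] <;>
      first
        | rw [hs i j k]
        | linear_combination c * h1
        | linear_combination c * h2
        | linear_combination c * h3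
        | linear_combination c * h4

open Module

def relabel : (Fin 2 → Fin 2 → Fin 2 → ℝ) ≃ₗ[ℝ] (Fin 2 → Fin 2 → Fin 2 → ℝ) where
  toFun X i j k := X i.rev j.rev k.rev
  invFun X i j k := X i.rev j.rev k.rev
  map_add' _ _ := rfl
  map_smul' _ _ := rfl
  left_inv X := by simp
  right_inv X := by simp

lemma relabel_mem_P {F1 F2 : ℝ} {X : Fin 2 → Fin 2 → Fin 2 → ℝ} (hX : X ∈ P F1 F2) :
    relabel X ∈ P F2 F1 := by
  obtain ⟨hs, h1, h2, h3, h4⟩ := hX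
  have h01 : (0 : Fin 2).rev = 1 := rfl
  have h10 : (1 : Fin 2).rev = 0 := rfl
  refine ⟨fun i j k => hs _ _ _, ?_, ?_, ?_, ?_⟩ <;>
    simp only [relabel, LinearEquiv.coe_mk, LinearMap.coe_mk, AddHom.coe_mk, h01, h10,
      hs 0 1 0, hs 1 1 0]
  · linear_combination h4
  · linear_combination h3
  · linear_combination h2
  · linear_combination h1

lemma map_relabel_P (F1 F2 : ℝ) : (P F1 F2).map relabel.toLinearMap = P F2 F1 := by
  refine le_antisymm (Submodule.map_le_iff_le_comap.2 fun X hX => relabel_mem_P hX) fun X hX => ?_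
  exact ⟨relabel X, relabel_mem_P hX, relabel.apply_symm_apply X⟩

lemma finrank_P_comm (F1 F2 : ℝ) : finrank ℝ (P F1 F2) = finrank ℝ (P F2 F1) := by
  rw [← map_relabel_P, LinearEquiv.finrank_map_eq]

lemma eq_zero_of_mem_P {F1 F2 : ℝ} (hF1 : F1 ≠ 0) {X : Fin 2 → Fin 2 → Fin 2 → ℝ}
    (hX : X ∈ P F1 F2) (h000 : X 0 0 0 = 0) (h100 : X 1 0 0 = 0) : X = 0 := by
  obtain ⟨hs, h1, h2, h3, h4⟩ := hX
  have h101 : X 1 0 1 = 0 := (mul_eq_zero_iff_left hF1).1 <|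
    by linear_combination h1 - 2 * F1 * h000 - F2 * h100
  have h001 : X 0 0 1 = 0 := (mul_eq_zero_iff_left hF1).1 <|
    by linear_combination h3 - F2 * h000 - 2 * F2 * h101
  have h111 : X 1 1 1 = 0 := (mul_eq_zero_iff_left hF1).1 <|
    by linear_combination h2 - 2 * F1 * h001 - F2 * h101
  have h011 : X 0 1 1 = 0 := (mul_eq_zero_iff_left hF1).1 <|
    by linear_combination h4 - F2 * h001 - 2 * F2 * h111
  funext i j k
  fin_cases i <;> fin_cases j <;> fin_cases k
  all_goals first | assumption | exact (hs _ _ _).trans ‹_›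

lemma exists_mem_P {F1 F2 : ℝ} (hF1 : F1 ≠ 0) (a d : ℝ) :
    ∃ X ∈ P F1 F2, X 0 0 0 = a ∧ X 1 0 0 = d := by
  have solve (y : ℝ) : ∃ x, F1 * x = y := ⟨y / F1, mul_div_cancel₀ y hF1⟩
  obtain ⟨e, he⟩ := solve (-(2 * F1 * a + F2 * d))
  obtain ⟨b, hb⟩ := solve (-(F2 * a + 2 * F2 * e))
  obtain ⟨f, hf⟩ := solve (-(2 * F1 * b + F2 * e))
  obtain ⟨c, hc⟩ := solve (-(F2 * b + 2 * F2 * f))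
  refine ⟨![![![a, b], ![b, c]], ![![d, e], ![e, f]]], ⟨?_, ?_, ?_, ?_, ?_⟩, rfl, rfl⟩
  · intro i j k
    fin_cases i <;> fin_cases j <;> fin_cases k <;> rfl
  all_goals simp only [Matrix.cons_val_zero, Matrix.cons_val_one]
  · linear_combination he
  · linear_combination hf
  · linear_combination hb
  · linear_combination hc

def projP (F1 F2 : ℝ) : P F1 F2 →ₗ[ℝ] ℝ × ℝ where
  toFun X := (X.1 0 0 0, X.1 1 0 0)
  map_add' _ _ := rfl
  map_smul' _ _ := rfl

lemma finrank_P_of_ne_zero {F1 : ℝ} (hF1 : F1 ≠ 0) (F2 : ℝ) : finrank ℝ (P F1 F2) = 2 := by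
  have hbij : Function.Bijective (projP F1 F2) := by
    refine ⟨(injective_iff_map_eq_zero _).2 fun X hX => ?_, fun ⟨a, d⟩ => ?_⟩
    · obtain ⟨h000, h100⟩ := Prod.mk_eq_zero.1 hX
      exact Subtype.ext (eq_zero_of_mem_P hF1 X.2 h000 h100)
    · obtain ⟨X, hX, rfl, rfl⟩ := exists_mem_P hF1 a d
      exact ⟨⟨X, hX⟩, rfl⟩
  rw [(LinearEquiv.ofBijective _ hbij).finrank_eq, finrank_prod, finrank_self]

theorem stmt7 (F1 F2 : ℝ) (h : ((F1, F2) : ℝ × ℝ) ≠ 0) :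
    Module.finrank ℝ (P F1 F2) = 2 := by
  rcases not_and_or.1 (mt Prod.mk_eq_zero.2 h) with hF1 | hF2
  · exact finrank_P_of_ne_zero hF1 F2
  · rw [finrank_P_comm]
    exact finrank_P_of_ne_zero hF2 F1
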